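/- Let n ≥ 1, let f : ℝ → ℝ be of class C^{n−1} with f^{(n−1)} Lipschitz with constant K ≥ 0, and let m₁, …, mₙ ∈ ℝ. Define g₁(t) = f(t + m₁) − f(t) and g_{k+1}(t) = g_k(t + m_{k+1}) − g_k(t). Then for each k with 1 ≤ k ≤ n, the function g_k is of class C^{n−k} and its (n−k)-th derivative satisfies |g_k^{(n−k)}(t)| ≤ K · |m₁| ⋯ |m_k| for all t ∈ ℝ. -/

import Mathlib

/-!
Each forward difference trades one derivative for one factor `|mⱼ|`: differentiation commutes
with `Δ_[m]`, so `(Δ_[m] h)^{(r)} = Δ_[m] (h^{(r)})`, which is bounded by `|m|` times any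
Lipschitz constant of `h^{(r)}`. For `g₁` that constant is `K`; for `g_{k+1}` the mean value
theorem turns the bound `K·|m₁|⋯|m_k|` on `g_k^{(r+1)}` into a Lipschitz constant of `g_k^{(r)}`.
-/

open scoped fwdDiff

section NontriviallyNormedField

variable {𝕜 F : Type*} [NontriviallyNormedField 𝕜] [NormedAddCommGroup F] [NormedSpace 𝕜 F]

theorem ContDiff.fwdDiff {n : WithTop ℕ∞} {f : 𝕜 → F} (hf : ContDiff 𝕜 n f) (h : 𝕜) :
    ContDiff 𝕜 n (Δ_[h] f) :=
  (hf.comp (contDiff_id.add contDiff_const)).sub hf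

theorem iteratedDeriv_fwdDiff {r : ℕ} {f : 𝕜 → F} (hf : ContDiff 𝕜 r f) (h : 𝕜) :
    iteratedDeriv r (Δ_[h] f) = Δ_[h] (iteratedDeriv r f) := by
  have hshift : ContDiff 𝕜 r (fun x => f (x + h)) := hf.comp (contDiff_id.add contDiff_const)
  funext t
  show iteratedDeriv r (fun x => f (x + h) - f x) t = _
  rw [iteratedDeriv_fun_sub hshift.contDiffAt hf.contDiffAt, iteratedDeriv_comp_add_const]
  rfl

theorem norm_iteratedDeriv_fwdDiff_le {r : ℕ} {f : 𝕜 → F} {K : ℝ} (hf : ContDiff 𝕜 r f)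
    (hlip : ∀ s t, ‖iteratedDeriv r f s - iteratedDeriv r f t‖ ≤ K * ‖s - t‖) (h t : 𝕜) :
    ‖iteratedDeriv r (Δ_[h] f) t‖ ≤ K * ‖h‖ := by
  simpa [iteratedDeriv_fwdDiff hf, fwdDiff] using hlip (t + h) t

end NontriviallyNormedField

theorem norm_iteratedDeriv_sub_le_of_norm_iteratedDeriv_succ_le {𝕜 F : Type*} [RCLike 𝕜]
    [NormedAddCommGroup F] [NormedSpace 𝕜 F] {r : ℕ} {f : 𝕜 → F} {C : ℝ}
    (hf : ContDiff 𝕜 (r + 1) f) (hC : ∀ t, ‖iteratedDeriv (r + 1) f t‖ ≤ C) (s t : 𝕜) :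
    ‖iteratedDeriv r f s - iteratedDeriv r f t‖ ≤ C * ‖s - t‖ := by
  have hdiff : Differentiable 𝕜 (iteratedDeriv r f) :=
    hf.differentiable_iteratedDeriv r (by exact_mod_cast r.lt_succ_self)
  refine convex_univ.norm_image_sub_le_of_norm_deriv_le (fun x _ => hdiff x) (fun x _ => ?_)
    (Set.mem_univ t) (Set.mem_univ s)
  simpa [← iteratedDeriv_succ] using hC x

theorem iterated_difference_deriv_bound_general (n : ℕ)
    (f : ℝ → ℝ) (K : ℝ)
    (hf : ContDiff ℝ (n - 1 : ℕ) f)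
    (hlip : ∀ s t : ℝ,
      |iteratedDeriv (n - 1) f s - iteratedDeriv (n - 1) f t| ≤ K * |s - t|)
    (m : ℕ → ℝ) (g : ℕ → ℝ → ℝ)
    (hg1 : ∀ t : ℝ, g 1 t = f (t + m 1) - f t)
    (hgk : ∀ k : ℕ, 1 ≤ k → k ≤ n - 1 → ∀ t : ℝ,
      g (k + 1) t = g k (t + m (k + 1)) - g k t)
    (k : ℕ) (hk1 : 1 ≤ k) (hkn : k ≤ n) :
    ContDiff ℝ (n - k : ℕ) (g k) ∧
      ∀ t : ℝ, |iteratedDeriv (n - k) (g k) t| ≤ K * ∏ j ∈ Finset.Icc 1 k, |m j| := by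
  induction k, hk1 using Nat.le_induction with
  | base =>
    have hg : g 1 = Δ_[m 1] f := funext hg1
    refine ⟨hg ▸ hf.fwdDiff _, fun t => ?_⟩
    simpa [hg] using norm_iteratedDeriv_fwdDiff_le hf (by simpa using hlip) (m 1) t
  | succ k hk ih =>
    obtain ⟨hsmooth, hbound⟩ := ih (by omega)
    have hg : g (k + 1) = Δ_[m (k + 1)] (g k) := funext (hgk k hk (by omega))
    rw [show n - k = n - (k + 1) + 1 by omega] at hsmooth hbound
    have hsmooth' : ContDiff ℝ (n - (k + 1) : ℕ) (g k) := hsmooth.of_le (by exact_mod_cast by omega)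
    refine ⟨hg ▸ hsmooth'.fwdDiff _, fun t => ?_⟩
    rw [Finset.prod_Icc_succ_top (by omega), ← mul_assoc]
    simpa [hg] using norm_iteratedDeriv_fwdDiff_le hsmooth'
      (norm_iteratedDeriv_sub_le_of_norm_iteratedDeriv_succ_le hsmooth hbound) (m (k + 1)) t

/-- If `f` is of class `C^{n-1}` with `f^{(n-1)}` Lipschitz with constant `K`, then the
`k`-th iterated forward difference `g_k` of `f` with steps `m₁,…,m_k` is of class `C^{n-k}`
and its `(n-k)`-th derivative is bounded by `K·|m₁|⋯|m_k|`. -/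
theorem iterated_difference_deriv_bound (n : ℕ) (hn : 1 ≤ n)
    (f : ℝ → ℝ) (K : ℝ) (hK : 0 ≤ K)
    (hf : ContDiff ℝ (n - 1 : ℕ) f)
    (hlip : ∀ s t : ℝ,
      |iteratedDeriv (n - 1) f s - iteratedDeriv (n - 1) f t| ≤ K * |s - t|)
    (m : ℕ → ℝ) (g : ℕ → ℝ → ℝ)
    (hg1 : ∀ t : ℝ, g 1 t = f (t + m 1) - f t)
    (hgk : ∀ k : ℕ, 1 ≤ k → k ≤ n - 1 → ∀ t : ℝ,
      g (k + 1) t = g k (t + m (k + 1)) - g k t)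
    (k : ℕ) (hk1 : 1 ≤ k) (hkn : k ≤ n) :
    ContDiff ℝ (n - k : ℕ) (g k) ∧
      ∀ t : ℝ, |iteratedDeriv (n - k) (g k) t| ≤ K * ∏ j ∈ Finset.Icc 1 k, |m j| :=
  iterated_difference_deriv_bound_general n f K hf hlip m g hg1 hgk k hk1 hkn
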